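/- Existence and band structure of the B-spline refinement: let p ≥ 1, let y : ℤ → ℝ be a strictly increasing sequence of fine-scale knots, and let the coarse-scale knots be x_k = y_{2k} (two-nested grids). Denote by φ_k^[p] the B-splines on the coarse knots x and by ψ_ℓ^[p] the B-splines on the fine knots y. Then for every k ∈ ℤ there exist unique real coefficients H_{ℓ,k}, defined for ℓ ∈ ℤ and vanishing unless 2k−⌊p/2⌋ ≤ ℓ ≤ 2k+⌈p/2⌉, such that φ_k^[p](t) = Σ_ℓ H_{ℓ,k} ψ_ℓ^[p](t) for every t ∈ ℝ. In particular, each column of the refinement matrix has at most p+1 nonzero entries. -/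

import Mathlib

/-!
Indexed by its leftmost knot, a B-spline satisfies the Cox–de Boor recursion. The coarse grid
`m ↦ y (2 m)` becomes the fine grid `y` near the support of `φ_k` after inserting the `p` odd knots
of `y` lying there, one at a time. By Boehm's knot insertion formula every insertion writes each
B-spline as a combination of two consecutive B-splines on the refined grid, so `φ_k` is a
combination of the `p + 1` fine B-splines supported in its own support. The fine B-splines are
linearly independent, since on the first knot interval of the leftmost member of a finite family
all the others vanish; this gives uniqueness.
-/

/-- B-splines of order `p` on the strictly increasing knot sequence `x : ℤ → ℝ`,
defined by the recursion of Definition 2 of the paper.  `Bspline x p k` is the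
B-spline of order `p` (degree `p-1`) associated with the knot `x k`. -/
noncomputable def Bspline (x : ℤ → ℝ) : ℕ → ℤ → ℝ → ℝ
  | 0, _, _ => 0
  | 1, k, t => if x k ≤ t ∧ t < x (k + 1) then 1 else 0
  | p + 2, k, t =>
      ((t - x (k - ((p + 2) / 2 : ℕ))) /
          (x (k + ((p + 3) / 2 : ℕ) - 1) - x (k - ((p + 2) / 2 : ℕ)))) *
        Bspline x (p + 1) (k - 1 + ((p + 2) % 2 : ℕ)) t +
      ((x (k + ((p + 3) / 2 : ℕ)) - t) /
          (x (k + ((p + 3) / 2 : ℕ)) - x (k - ((p + 2) / 2 : ℕ) + 1))) *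
        Bspline x (p + 1) (k + ((p + 2) % 2 : ℕ)) t

/-- The B-spline of order `q` indexed by its leftmost knot: its knots are `z i, …, z (i + q)`. -/
noncomputable def leftBspline (z : ℤ → ℝ) : ℕ → ℤ → ℝ → ℝ
  | 0, _, _ => 0
  | 1, i, t => if z i ≤ t ∧ t < z (i + 1) then 1 else 0
  | q + 2, i, t =>
      (t - z i) / (z (i + q + 1) - z i) * leftBspline z (q + 1) i t +
        (z (i + q + 2) - t) / (z (i + q + 2) - z (i + 1)) * leftBspline z (q + 1) (i + 1) t

theorem Bspline_eq_leftBspline (z : ℤ → ℝ) (q : ℕ) (k : ℤ) :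
    Bspline z q k = leftBspline z q (k - (q / 2 : ℕ)) := by
  induction q generalizing k with
  | zero => rfl
  | succ q ih =>
    rcases q with _ | q
    · funext t
      simp [Bspline, leftBspline]
    · funext t
      have e₁ : k - 1 + ((q + 2) % 2 : ℕ) - ((q + 1) / 2 : ℕ) = k - ((q + 2) / 2 : ℕ) := by omega
      have e₂ : k + ((q + 2) % 2 : ℕ) - ((q + 1) / 2 : ℕ) = k - ((q + 2) / 2 : ℕ) + 1 := by omega
      have e₃ : k + ((q + 3) / 2 : ℕ) = k - ((q + 2) / 2 : ℕ) + q + 2 := by omega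
      have e₄ : k - ((q + 2) / 2 : ℕ) + q + 2 - 1 = k - ((q + 2) / 2 : ℕ) + q + 1 := by ring
      simp only [Bspline, leftBspline, ih, e₁, e₂, e₃, e₄]

theorem Bspline_eq_leftBspline_comp (z : ℤ → ℝ) (q : ℕ) :
    Bspline z q = leftBspline z q ∘ fun k => k - (q / 2 : ℕ) :=
  funext (Bspline_eq_leftBspline z q)

section LeftBspline

variable {z w : ℤ → ℝ} {q : ℕ} {i : ℤ} {t : ℝ}

theorem leftBspline_eq_of_window_eq {i' : ℤ} (h : ∀ m : ℕ, m ≤ q → z (i + m) = w (i' + m)) :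
    leftBspline z q i = leftBspline w q i' := by
  induction q generalizing i i' with
  | zero => rfl
  | succ q ih =>
    funext t
    rcases q with _ | q
    · have h₀ := h 0 (by omega)
      have h₁ := h 1 le_rfl
      simp only [Nat.cast_zero, add_zero, Nat.cast_one] at h₀ h₁
      simp only [leftBspline, h₀, h₁]
    · have h₀ := h 0 (by omega)
      have h₁ := h 1 (by omega)
      have h₂ := h (q + 1) (by omega)
      have h₃ := h (q + 2) (by omega)
      push_cast at h₀ h₁ h₂ h₃
      simp only [add_zero] at h₀
      simp only [leftBspline, ← add_assoc] at h₂ h₃ ⊢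
      rw [h₀, h₁, h₂, h₃, ih fun m hm => h m (by omega),
        ih (i := i + 1) (i' := i' + 1) fun m hm => by
          simpa [add_assoc, add_comm (1 : ℤ)] using h (m + 1) (by omega)]

theorem leftBspline_eq_zero_of_lt (hz : Monotone z) (ht : t < z i) : leftBspline z q i t = 0 := by
  induction q generalizing i with
  | zero => rfl
  | succ q ih =>
    rcases q with _ | q
    · simp [leftBspline, not_le.2 ht]
    · simp only [leftBspline, ih ht, ih (ht.trans_le (hz (by omega : i ≤ i + 1)))]
      ring

theorem leftBspline_eq_zero_of_le (hz : Monotone z) (ht : z (i + q) ≤ t) :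
    leftBspline z q i t = 0 := by
  induction q generalizing i with
  | zero => rfl
  | succ q ih =>
    rcases q with _ | q
    · norm_num at ht
      simp [leftBspline, ht]
    · have h₁ : z (i + (q + 1 : ℕ)) ≤ t := (hz (by omega)).trans ht
      have h₂ : z (i + 1 + (q + 1 : ℕ)) ≤ t := (hz (by omega)).trans ht
      simp only [leftBspline, ih h₁, ih h₂]
      ring

theorem leftBspline_nonneg (hz : Monotone z) : 0 ≤ leftBspline z q i t := by
  induction q generalizing i with
  | zero => exact le_rfl
  | succ q ih =>
    rcases q with _ | q
    · simp only [leftBspline]; split_ifs <;> norm_num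
    · have hl : 0 ≤ (t - z i) / (z (i + q + 1) - z i) * leftBspline z (q + 1) i t := by
        rcases lt_or_ge t (z i) with h | h
        · rw [leftBspline_eq_zero_of_lt hz h, mul_zero]
        · exact mul_nonneg (div_nonneg (sub_nonneg.2 h) (sub_nonneg.2 (hz (by omega)))) ih
      have hr : 0 ≤ (z (i + q + 2) - t) / (z (i + q + 2) - z (i + 1)) *
          leftBspline z (q + 1) (i + 1) t := by
        rcases le_or_gt (z (i + q + 2)) t with h | h
        · rw [leftBspline_eq_zero_of_le hz (by rwa [show i + 1 + ((q + 1 : ℕ) : ℤ) = i + q + 2 by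
            push_cast; ring]), mul_zero]
        · exact mul_nonneg (div_nonneg (sub_nonneg.2 h.le) (sub_nonneg.2 (hz (by omega)))) ih
      exact add_nonneg hl hr

theorem leftBspline_pos (hz : StrictMono z) (hq : 1 ≤ q) (h₁ : z i < t) (h₂ : t < z (i + 1)) :
    0 < leftBspline z q i t := by
  induction q, hq using Nat.le_induction generalizing i with
  | base => simp [leftBspline, h₁.le, h₂]
  | succ q hq ih =>
    obtain ⟨q, rfl⟩ : ∃ q', q = q' + 1 := ⟨q - 1, by omega⟩
    have hl : 0 < (t - z i) / (z (i + q + 1) - z i) * leftBspline z (q + 1) i t :=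
      mul_pos (div_pos (sub_pos.2 h₁) (sub_pos.2 (hz (by omega)))) (ih h₁ h₂)
    have hr : 0 ≤ (z (i + q + 2) - t) / (z (i + q + 2) - z (i + 1)) *
        leftBspline z (q + 1) (i + 1) t :=
      mul_nonneg (div_nonneg (sub_nonneg.2 (h₂.trans (hz (by omega))).le)
        (sub_nonneg.2 (hz.monotone (by omega)))) (leftBspline_nonneg hz.monotone)
    exact add_pos_of_pos_of_nonneg hl hr

theorem linearIndependent_leftBspline (hz : StrictMono z) (hq : 1 ≤ q) :
    LinearIndependent ℝ (leftBspline z q) := by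
  rw [linearIndependent_iff']
  intro s
  induction s using Finset.induction_on_min with
  | empty => simp
  | insert a s has ih =>
    intro g hg
    have ha : a ∉ s := fun h => lt_irrefl a (has a h)
    rw [Finset.sum_insert ha] at hg
    obtain ⟨t, ht₁, ht₂⟩ := exists_between (hz (lt_add_one a))
    have hs : ∀ b ∈ s, leftBspline z q b t = 0 := fun b hb =>
      leftBspline_eq_zero_of_lt hz.monotone (ht₂.trans_le (hz.monotone (has b hb)))
    have hga : g a = 0 := by
      have := congrFun hg t
      simp only [Pi.add_apply, Finset.sum_apply, Pi.smul_apply, smul_eq_mul, Pi.zero_apply] at this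
      rw [Finset.sum_eq_zero fun b hb => by rw [hs b hb, mul_zero], add_zero] at this
      exact (mul_eq_zero.1 this).resolve_right (leftBspline_pos hz hq ht₁ ht₂).ne'
    rw [hga, zero_smul, zero_add] at hg
    intro i hi
    rcases Finset.mem_insert.1 hi with rfl | hi
    exacts [hga, ih g hg i hi]

end LeftBspline

noncomputable def knotRatio (z : ℤ → ℝ) (q : ℕ) (i : ℤ) (t : ℝ) : ℝ :=
  (t - z i) / (z (i + q) - z i)

theorem leftBspline_succ_succ {z : ℤ → ℝ} (hz : StrictMono z) (q : ℕ) (i : ℤ) (t : ℝ) :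
    leftBspline z (q + 2) i t = knotRatio z (q + 1) i t * leftBspline z (q + 1) i t +
      (1 - knotRatio z (q + 1) (i + 1) t) * leftBspline z (q + 1) (i + 1) t := by
  have hne : z (i + q + 2) - z (i + 1) ≠ 0 := sub_ne_zero.2 (hz (by omega)).ne'
  have hρ : (z (i + q + 2) - t) / (z (i + q + 2) - z (i + 1)) =
      1 - knotRatio z (q + 1) (i + 1) t := by
    rw [knotRatio, show i + 1 + ((q + 1 : ℕ) : ℤ) = i + q + 2 by push_cast; ring]
    field_simp
    ring
  have hω : (t - z i) / (z (i + q + 1) - z i) = knotRatio z (q + 1) i t := by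
    rw [knotRatio, show i + ((q + 1 : ℕ) : ℤ) = i + q + 1 by push_cast; ring]
  rw [leftBspline, hω, hρ]

def insertKnot (z : ℤ → ℝ) (j : ℤ) (u : ℝ) : ℤ → ℝ :=
  fun m => if m < j then z m else if m = j then u else z (m - 1)

/-- The coefficient in Boehm's knot insertion formula; `d` is the degree (the order minus one). -/
noncomputable def insertCoef (z : ℤ → ℝ) (j : ℤ) (u : ℝ) (d : ℕ) (i : ℤ) : ℝ :=
  if i + d < j then 1 else if j ≤ i then 0 else knotRatio z d i u

section KnotInsertion

variable {z : ℤ → ℝ} {j : ℤ} {u : ℝ} {d : ℕ} {i m : ℤ}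

theorem insertKnot_of_lt (h : m < j) : insertKnot z j u m = z m := if_pos h

theorem insertKnot_self : insertKnot z j u j = u := by simp [insertKnot]

theorem insertKnot_add_one (h : j ≤ m) : insertKnot z j u (m + 1) = z m := by
  simp [insertKnot, show ¬m + 1 < j by omega, show m + 1 ≠ j by omega]

theorem strictMono_insertKnot (hz : StrictMono z) (hu₁ : z (j - 1) < u) (hu₂ : u < z j) :
    StrictMono (insertKnot z j u) := by
  refine strictMono_int_of_lt_succ fun m => ?_
  rcases lt_trichotomy (m + 1) j with h | h | h
  · rw [insertKnot_of_lt (by omega), insertKnot_of_lt h]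
    exact hz (lt_add_one m)
  · rw [insertKnot_of_lt (by omega), h, insertKnot_self, show m = j - 1 by omega]
    exact hu₁
  · rw [insertKnot_add_one (by omega)]
    rcases eq_or_lt_of_le (show j ≤ m by omega) with rfl | h'
    · rwa [insertKnot_self]
    · rw [show m = m - 1 + 1 by ring, insertKnot_add_one (by omega), sub_add_cancel]
      exact hz (sub_one_lt m)

theorem insertCoef_of_lt (h : i + d < j) : insertCoef z j u d i = 1 := if_pos h

theorem insertCoef_of_le (h : j ≤ i) : insertCoef z j u d i = 0 := by
  rw [insertCoef, if_neg (by omega), if_pos h]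

theorem insertCoef_of_lt_of_le (h₁ : i < j) (h₂ : j ≤ i + d) :
    insertCoef z j u d i = knotRatio z d i u := by
  rw [insertCoef, if_neg (by omega), if_neg (by omega)]

theorem knotRatio_mul_insertCoef (hz : StrictMono z) (hu₁ : z (j - 1) < u) (d : ℕ) (i : ℤ)
    (t : ℝ) :
    knotRatio z (d + 1) i t * insertCoef z j u d i =
      insertCoef z j u (d + 1) i * knotRatio (insertKnot z j u) (d + 1) i t := by
  have hd : i + ((d + 1 : ℕ) : ℤ) = i + d + 1 := by push_cast; ring
  rcases (by omega : j ≤ i ∨ (i < j ∧ j ≤ i + d) ∨ j = i + d + 1 ∨ i + d + 1 < j)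
    with h | ⟨h₁, h₂⟩ | h | h
  · rw [insertCoef_of_le h, insertCoef_of_le h, mul_zero, zero_mul]
  · rw [insertCoef_of_lt_of_le h₁ h₂, insertCoef_of_lt_of_le h₁ (by omega)]
    simp only [knotRatio, hd, insertKnot_of_lt h₁, insertKnot_add_one h₂]
    ring
  · have hne : u - z i ≠ 0 := sub_ne_zero.2 ((hz.monotone (by omega)).trans_lt hu₁).ne'
    have hj : insertKnot z j u (i + d + 1) = u := h ▸ insertKnot_self
    rw [insertCoef_of_lt (by omega), insertCoef_of_lt_of_le (by omega) (by omega)]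
    simp only [knotRatio, hd, insertKnot_of_lt (show i < j by omega), hj]
    field_simp
  · rw [insertCoef_of_lt (by omega), insertCoef_of_lt (by omega)]
    simp only [knotRatio, hd, insertKnot_of_lt (show i < j by omega), insertKnot_of_lt h]
    ring

theorem one_sub_knotRatio_mul_one_sub_insertCoef (hz : StrictMono z) (hu₂ : u < z j) (d : ℕ)
    (i : ℤ) (t : ℝ) :
    (1 - knotRatio z (d + 1) i t) * (1 - insertCoef z j u d (i + 1)) =
      (1 - insertCoef z j u (d + 1) i) * (1 - knotRatio (insertKnot z j u) (d + 1) (i + 1) t) := by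
  have hd : i + ((d + 1 : ℕ) : ℤ) = i + d + 1 := by push_cast; ring
  have hd' : i + 1 + ((d + 1 : ℕ) : ℤ) = i + d + 1 + 1 := by push_cast; ring
  have hne : z (i + d + 1) - z i ≠ 0 := sub_ne_zero.2 (hz (by omega)).ne'
  rcases (by omega : j ≤ i ∨ j = i + 1 ∨ (i + 1 < j ∧ j ≤ i + d + 1) ∨ i + d + 1 < j)
    with h | h | ⟨h₁, h₂⟩ | h
  · rw [insertCoef_of_le (by omega), insertCoef_of_le h]
    simp only [knotRatio, hd, hd', insertKnot_add_one h,
      insertKnot_add_one (by omega : j ≤ i + d + 1)]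
    ring
  · have hne' : z (i + d + 1) - u ≠ 0 :=
      sub_ne_zero.2 (hu₂.trans_le (hz.monotone (by omega))).ne'
    have hj : insertKnot z j u (i + 1) = u := h ▸ insertKnot_self
    rw [insertCoef_of_le (by omega), insertCoef_of_lt_of_le (by omega) (by omega)]
    simp only [knotRatio, hd, hd', insertKnot_add_one (by omega : j ≤ i + d + 1), hj]
    field_simp
    ring
  · have hne' : z (i + d + 1) - z (i + 1) ≠ 0 := sub_ne_zero.2 (hz (by omega)).ne'
    rw [insertCoef_of_lt_of_le h₁ (by omega), insertCoef_of_lt_of_le (by omega) (by omega)]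
    simp only [knotRatio, hd, hd', show i + 1 + (d : ℤ) = i + d + 1 by ring, insertKnot_of_lt h₁,
      insertKnot_add_one h₂]
    field_simp
    ring
  · rw [insertCoef_of_lt (by omega), insertCoef_of_lt (by omega), sub_self, mul_zero, zero_mul]

/-- Boehm's knot insertion formula. -/
theorem leftBspline_insertKnot (hz : StrictMono z) (hu₁ : z (j - 1) < u) (hu₂ : u < z j)
    (d : ℕ) (i : ℤ) (t : ℝ) :
    leftBspline z (d + 1) i t =
      insertCoef z j u d i * leftBspline (insertKnot z j u) (d + 1) i t +
        (1 - insertCoef z j u d (i + 1)) * leftBspline (insertKnot z j u) (d + 1) (i + 1) t := by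
  induction d generalizing i with
  | zero =>
    rcases (by omega : i + 1 < j ∨ i + 1 = j ∨ j ≤ i) with h | h | h
    · rw [insertCoef_of_lt (by omega), insertCoef_of_lt (by omega)]
      simp [leftBspline, insertKnot_of_lt h, insertKnot_of_lt (show i < j by omega)]
    · have hi : z i < u := by rwa [show i = j - 1 by omega]
      have hi' : u < z (i + 1) := by rwa [h]
      have hj : insertKnot z j u (i + 1) = u := h ▸ insertKnot_self
      rw [insertCoef_of_lt (by omega), insertCoef_of_le (by omega)]
      simp only [leftBspline, insertKnot_of_lt (show i < j by omega), hj,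
        insertKnot_add_one (show j ≤ i + 1 by omega)]
      rcases lt_or_ge t u with ht | ht
      · simp [ht, not_le.2 ht, ht.trans hi']
      · simp [ht, not_lt.2 ht, hi.le.trans ht]
    · rw [insertCoef_of_le h, insertCoef_of_le (by omega)]
      simp [leftBspline, insertKnot_add_one h, insertKnot_add_one (show j ≤ i + 1 by omega)]
  | succ d ih =>
    have hz' := strictMono_insertKnot hz hu₁ hu₂
    rw [leftBspline_succ_succ hz, ih i, ih (i + 1), leftBspline_succ_succ hz',
      leftBspline_succ_succ hz']
    -- the middle coefficients agree by the two outer identities at the neighbouring indices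
    linear_combination
      leftBspline (insertKnot z j u) (d + 1) i t * knotRatio_mul_insertCoef hz hu₁ d i t +
      leftBspline (insertKnot z j u) (d + 1) (i + 1) t *
        (-knotRatio_mul_insertCoef hz hu₁ d (i + 1) t -
          one_sub_knotRatio_mul_one_sub_insertCoef hz hu₂ d i t) +
      leftBspline (insertKnot z j u) (d + 1) (i + 1 + 1) t *
        one_sub_knotRatio_mul_one_sub_insertCoef hz hu₂ d (i + 1) t

theorem leftBspline_mem_span_insertKnot (hz : StrictMono z) (hu₁ : z (j - 1) < u)
    (hu₂ : u < z j) (q : ℕ) (i : ℤ) :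
    leftBspline z q i ∈ Submodule.span ℝ
      {leftBspline (insertKnot z j u) q i, leftBspline (insertKnot z j u) q (i + 1)} := by
  rcases q with _ | d
  · exact zero_mem _
  · refine Submodule.mem_span_pair.2 ⟨insertCoef z j u d i, 1 - insertCoef z j u d (i + 1), ?_⟩
    funext t
    simp [leftBspline_insertKnot hz hu₁ hu₂ d i t]

theorem span_leftBspline_le_insertKnot (hz : StrictMono z) (hu₁ : z (j - 1) < u)
    (hu₂ : u < z j) (q : ℕ) (a b : ℤ) :
    Submodule.span ℝ (leftBspline z q '' Set.Icc a b) ≤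
      Submodule.span ℝ (leftBspline (insertKnot z j u) q '' Set.Icc a (b + 1)) := by
  refine Submodule.span_le.2 ?_
  rintro _ ⟨i, ⟨hai, hib⟩, rfl⟩
  refine Submodule.span_mono ?_ (leftBspline_mem_span_insertKnot hz hu₁ hu₂ q i)
  rintro _ (rfl | rfl)
  exacts [⟨i, ⟨hai, by omega⟩, rfl⟩, ⟨i + 1, ⟨by omega, by omega⟩, rfl⟩]

end KnotInsertion

/-- The knots of `y` on `[a, a + 2n]`, and every other knot of `y` outside; `n = 0` is the coarse
grid `m ↦ y (2 m)` shifted by `a`, and inserting `y (a + 2n + 1)` passes from `n` to `n + 1`. -/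
def partialRefinement (y : ℤ → ℝ) (a : ℤ) (n : ℕ) : ℤ → ℝ :=
  fun m => if m ≤ a then y (2 * m - a) else if m ≤ a + 2 * n then y m else y (2 * m - a - 2 * n)

section PartialRefinement

variable {y : ℤ → ℝ} {a : ℤ} {n : ℕ}

theorem strictMono_partialRefinement (hy : StrictMono y) : StrictMono (partialRefinement y a n) :=
  strictMono_int_of_lt_succ fun m => by
    simp only [partialRefinement]
    split_ifs <;> exact hy (by omega)

theorem partialRefinement_zero_add (m : ℤ) : partialRefinement y a 0 (a + m) = y (a + 2 * m) := by
  simp only [partialRefinement]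
  split_ifs <;> congr 1 <;> omega

theorem partialRefinement_of_mem {m : ℤ} (h₁ : a ≤ m) (h₂ : m ≤ a + 2 * n) :
    partialRefinement y a n m = y m := by
  simp only [partialRefinement]
  split_ifs
  · congr 1
    omega
  · rfl

theorem insertKnot_partialRefinement :
    insertKnot (partialRefinement y a n) (a + 2 * n + 1) (y (a + 2 * n + 1)) =
      partialRefinement y a (n + 1) := by
  funext m
  simp only [insertKnot, partialRefinement]
  split_ifs <;> first | rfl | (congr 1; omega)

theorem leftBspline_partialRefinement_mem_span (hy : StrictMono y) (q : ℕ) (n : ℕ) :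
    leftBspline (partialRefinement y a 0) q a ∈
      Submodule.span ℝ (leftBspline (partialRefinement y a n) q '' Set.Icc a (a + n)) := by
  induction n with
  | zero => exact Submodule.subset_span ⟨a, by simp, rfl⟩
  | succ n ih =>
    have hu₁ : partialRefinement y a n (a + 2 * n + 1 - 1) < y (a + 2 * n + 1) := by
      rw [partialRefinement_of_mem (by omega) (by omega)]
      exact hy (by omega)
    have hu₂ : y (a + 2 * n + 1) < partialRefinement y a n (a + 2 * n + 1) := by
      rw [partialRefinement, if_neg (by omega), if_neg (by omega)]
      exact hy (by omega)
    have h := span_leftBspline_le_insertKnot (strictMono_partialRefinement hy) hu₁ hu₂ q a (a + n)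
    rw [insertKnot_partialRefinement, add_assoc, ← Nat.cast_succ] at h
    exact h ih

end PartialRefinement

theorem leftBspline_two_mul_mem_span {y : ℤ → ℝ} (hy : StrictMono y) (q : ℕ) (i : ℤ) :
    leftBspline (fun m => y (2 * m)) q i ∈
      Submodule.span ℝ (leftBspline y q '' Set.Icc (2 * i) (2 * i + q)) := by
  have hcoarse : leftBspline (fun m => y (2 * m)) q i =
      leftBspline (partialRefinement y (2 * i) 0) q (2 * i) :=
    leftBspline_eq_of_window_eq fun m _ => by rw [partialRefinement_zero_add]; ring_nf
  have hfine : leftBspline (partialRefinement y (2 * i) q) q '' Set.Icc (2 * i) (2 * i + q) =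
      leftBspline y q '' Set.Icc (2 * i) (2 * i + q) :=
    Set.image_congr fun j ⟨hj₁, hj₂⟩ => leftBspline_eq_of_window_eq fun m hm =>
      partialRefinement_of_mem (by omega) (by omega)
  rw [hcoarse, ← hfine]
  exact leftBspline_partialRefinement_mem_span hy q q

theorem existsUnique_finsum_of_mem_span {ι α R : Type*} [Ring R] {v : ι → α → R}
    (hv : LinearIndependent R v) {s : Finset ι} {f : α → R} (hf : f ∈ Submodule.span R (v '' s)) :
    ∃! H : ι → R, (∀ ℓ ∉ s, H ℓ = 0) ∧ ∀ t, f t = ∑ᶠ ℓ, H ℓ * v ℓ t := by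
  have hrep : ∀ H : ι → R, (∀ ℓ ∉ s, H ℓ = 0) →
      ((∀ t, f t = ∑ᶠ ℓ, H ℓ * v ℓ t) ↔ f = ∑ ℓ ∈ s, H ℓ • v ℓ) := by
    intro H hH
    have hsupp : ∀ t, (Function.support fun ℓ => H ℓ * v ℓ t) ⊆ s := fun t ℓ hℓ => by
      by_contra h
      exact hℓ (by simp [hH ℓ h])
    simp only [funext_iff, Finset.sum_apply, Pi.smul_apply, smul_eq_mul,
      finsum_eq_sum_of_support_subset _ (hsupp _)]
  obtain ⟨l, hl, rfl⟩ := (Finsupp.mem_span_image_iff_linearCombination R).1 hf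
  have hl₀ : ∀ ℓ ∉ s, l ℓ = 0 := (Finsupp.mem_supported' R l).1 hl
  refine ⟨l, ⟨hl₀, (hrep l hl₀).2 (Finsupp.linearCombination_apply_of_mem_supported R hl)⟩, ?_⟩
  rintro H ⟨hH₀, hH⟩
  have hsub : ∑ ℓ ∈ s, (H ℓ - l ℓ) • v ℓ = 0 := by
    simp only [sub_smul, Finset.sum_sub_distrib, ← (hrep H hH₀).1 hH,
      ← Finsupp.linearCombination_apply_of_mem_supported R hl, sub_self]
  funext ℓ
  by_cases hℓ : ℓ ∈ s
  · exact sub_eq_zero.1 (linearIndependent_iff'.1 hv s (fun ℓ => H ℓ - l ℓ) hsub ℓ hℓ)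
  · rw [hH₀ ℓ hℓ, hl₀ ℓ hℓ]

theorem linearIndependent_Bspline {y : ℤ → ℝ} (hy : StrictMono y) {p : ℕ} (hp : 1 ≤ p) :
    LinearIndependent ℝ (Bspline y p) := by
  rw [Bspline_eq_leftBspline_comp]
  exact (linearIndependent_leftBspline hy hp).comp _ sub_left_injective

theorem Bspline_two_mul_mem_span {y : ℤ → ℝ} (hy : StrictMono y) (p : ℕ) (k : ℤ) :
    Bspline (fun m => y (2 * m)) p k ∈ Submodule.span ℝ
      (Bspline y p '' Set.Icc (2 * k - (p / 2 : ℕ)) (2 * k + ((p + 1) / 2 : ℕ))) := by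
  have h : Bspline y p '' Set.Icc (2 * k - (p / 2 : ℕ)) (2 * k + ((p + 1) / 2 : ℕ)) =
      leftBspline y p '' Set.Icc (2 * (k - (p / 2 : ℕ))) (2 * (k - (p / 2 : ℕ)) + p) := by
    rw [Bspline_eq_leftBspline_comp, Set.image_comp, Set.image_sub_const_Icc]
    congr 2 <;> omega
  rw [h, Bspline_eq_leftBspline]
  exact leftBspline_two_mul_mem_span hy p _

theorem bspline_refinement_exists_unique_general
    (p : ℕ) (hp : 1 ≤ p) (y : ℤ → ℝ) (hy : StrictMono y)
    (k : ℤ) :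
    ∃! H : ℤ → ℝ,
      (∀ ℓ : ℤ, (ℓ < 2 * k - ((p / 2 : ℕ) : ℤ) ∨ 2 * k + (((p + 1) / 2 : ℕ) : ℤ) < ℓ) →
        H ℓ = 0) ∧
      ∀ t : ℝ, Bspline (fun m => y (2 * m)) p k t = ∑ᶠ ℓ : ℤ, H ℓ * Bspline y p ℓ t := by
  have h := existsUnique_finsum_of_mem_span (linearIndependent_Bspline hy hp)
    (s := Finset.Icc (2 * k - (p / 2 : ℕ)) (2 * k + ((p + 1) / 2 : ℕ)))
    (by simpa only [Finset.coe_Icc] using Bspline_two_mul_mem_span hy p k)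
  refine (existsUnique_congr fun H => and_congr_left' ?_).1 h
  simp only [Finset.mem_Icc, not_and_or, not_le]

/-- existence, uniqueness and band structure of the B-spline
refinement: with fine knots `y` and coarse knots `x k = y (2k)`, each coarse
B-spline `φ_k^[p]` is a unique linear combination of the fine B-splines
`ψ_ℓ^[p]`, with coefficients vanishing unless `2k - ⌊p/2⌋ ≤ ℓ ≤ 2k + ⌈p/2⌉`
(hence at most `p+1` nonzero entries per column). -/
theorem bspline_refinement_exists_unique
    (p : ℕ) (hp : 1 ≤ p) (y : ℤ → ℝ) (hy : StrictMono y)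
    (htop : Filter.Tendsto y Filter.atTop Filter.atTop)
    (hbot : Filter.Tendsto y Filter.atBot Filter.atBot)
    (k : ℤ) :
    ∃! H : ℤ → ℝ,
      (∀ ℓ : ℤ, (ℓ < 2 * k - ((p / 2 : ℕ) : ℤ) ∨ 2 * k + (((p + 1) / 2 : ℕ) : ℤ) < ℓ) →
        H ℓ = 0) ∧
      ∀ t : ℝ, Bspline (fun m => y (2 * m)) p k t = ∑ᶠ ℓ : ℤ, H ℓ * Bspline y p ℓ t :=
  bspline_refinement_exists_unique_general p hp y hy k
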